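/- arXiv:2101.02352 — 2 statements merged into one kernel-verified Lean document; each statement's English description precedes it below -/
import Mathlib

section
/- For coprime positive integers p and q, the set of zero points of M^{q/p} in the region [0,q)×[0,p), i.e., the set {x ∈ [0,q)×[0,p) : dist(x,(0,0)) = 0}, has exactly pq elements. -/
/-- `mmod k u` is the unique element of `[0, k)` such that `u - mmod k u`
is an integer multiple of `k`. -/
noncomputable def mmod (k : ℕ) (u : ℝ) : ℝ := u - (k : ℝ) * (⌊u / (k : ℝ)⌋ : ℤ)

/-- `dmod k u = min (mmod k u) (k - mmod k u)`. -/
noncomputable def dmod (k : ℕ) (u : ℝ) : ℝ := min (mmod k u) ((k : ℝ) - mmod k u)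

/-- Distance on the Möbius ring `M^{q/p}`, whose points lie in `[0,q) × [0,p)`:
the minimum over `j ∈ {0, …, p*q - 1}` of
`dmod q (y₁ - x₁ + j/p) + dmod p (y₂ - x₂ + j/q)`. -/
noncomputable def distMqp (p q : ℕ) (x y : ℝ × ℝ) : ℝ :=
  sInf {v : ℝ | ∃ j ∈ Finset.range (p * q),
    v = dmod q (y.1 - x.1 + (j : ℝ) / (p : ℝ)) + dmod p (y.2 - x.2 + (j : ℝ) / (q : ℝ))}

/-- Addition on the Möbius ring `M^{q/p}`. -/
noncomputable def oplusMqp (p q : ℕ) (x y : ℝ × ℝ) : ℝ × ℝ :=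
  (mmod q (x.1 + y.1), mmod p (x.2 + y.2))

/-
The zero points are exactly the pairs `(j/p, j/q)` with `j < pq`. Indeed, `dmod k u = 0` iff `u`
is a multiple of `k`, and two points of `[0, k)` differ by a multiple of `k` only if they are equal;
so a point `x` of the box is at distance `0` from the origin iff `x = (j/p, j/q)` for some `j`.
These `pq` points are distinct because `j ↦ j/p` is injective.
-/

lemma mmod_eq_mul_fract {k : ℕ} (hk : 0 < k) (u : ℝ) : mmod k u = k * Int.fract (u / k) := by
  have : (k : ℝ) ≠ 0 := by positivity
  unfold mmod Int.fract
  field_simp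

lemma mmod_mem_Ico {k : ℕ} (hk : 0 < k) (u : ℝ) : mmod k u ∈ Set.Ico (0 : ℝ) k := by
  rw [mmod_eq_mul_fract hk]
  have hk' : (0 : ℝ) < k := by exact_mod_cast hk
  exact ⟨by positivity, mul_lt_of_lt_one_right hk' (Int.fract_lt_one _)⟩

lemma dmod_nonneg {k : ℕ} (hk : 0 < k) (u : ℝ) : 0 ≤ dmod k u := by
  obtain ⟨h0, hlt⟩ := mmod_mem_Ico hk u
  exact le_min h0 (sub_nonneg.mpr hlt.le)

lemma dmod_eq_zero_iff {k : ℕ} (hk : 0 < k) (u : ℝ) : dmod k u = 0 ↔ ∃ n : ℤ, u = k * n := by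
  have hk' : (k : ℝ) ≠ 0 := by positivity
  constructor
  · intro hd
    have hm : mmod k u = 0 := by
      rcases min_eq_iff.mp hd with ⟨h, _⟩ | ⟨h, _⟩
      · exact h
      · linarith [(mmod_mem_Ico hk u).2]
    exact ⟨⌊u / k⌋, by unfold mmod at hm; linarith⟩
  · rintro ⟨n, rfl⟩
    have : mmod k (k * n) = 0 := by
      rw [mmod_eq_mul_fract hk, mul_div_cancel_left₀ _ hk', Int.fract_intCast, mul_zero]
    simp [dmod, this]

lemma dmod_sub_eq_zero_iff {k : ℕ} (hk : 0 < k) {u v : ℝ}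
    (hu : u ∈ Set.Ico (0 : ℝ) k) (hv : v ∈ Set.Ico (0 : ℝ) k) : dmod k (v - u) = 0 ↔ u = v := by
  rw [dmod_eq_zero_iff hk]
  constructor
  · rintro ⟨n, hn⟩
    have hk' : (0 : ℝ) < k := by exact_mod_cast hk
    have : n = 0 := by
      have hlo : (-1 : ℝ) < n := by nlinarith [hu.1, hu.2, hv.1, hv.2]
      have hhi : (n : ℝ) < 1 := by nlinarith [hu.1, hu.2, hv.1, hv.2]
      have : (-1 : ℤ) < n := by exact_mod_cast hlo
      have : n < 1 := by exact_mod_cast hhi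
      omega
    subst this
    simp only [Int.cast_zero, mul_zero] at hn
    linarith
  · rintro rfl
    exact ⟨0, by simp⟩

lemma Real.sInf_eq_zero_iff_zero_mem {s : Set ℝ} (hfin : s.Finite) (hne : s.Nonempty)
    (hnonneg : ∀ v ∈ s, 0 ≤ v) : sInf s = 0 ↔ (0 : ℝ) ∈ s :=
  ⟨fun h => h ▸ hne.csInf_mem hfin, fun h => IsLeast.csInf_eq ⟨h, hnonneg⟩⟩

lemma distMqp_eq_zero_iff {p q : ℕ} (hp : 0 < p) (hq : 0 < q) (x y : ℝ × ℝ) :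
    distMqp p q x y = 0 ↔ ∃ j < p * q,
      dmod q (y.1 - x.1 + j / p) = 0 ∧ dmod p (y.2 - x.2 + j / q) = 0 := by
  set g : ℕ → ℝ := fun j => dmod q (y.1 - x.1 + j / p) + dmod p (y.2 - x.2 + j / q)
  have hg : ∀ j, 0 ≤ g j := fun j => add_nonneg (dmod_nonneg hq _) (dmod_nonneg hp _)
  have hset : {v : ℝ | ∃ j ∈ Finset.range (p * q), v = g j} = g '' ↑(Finset.range (p * q)) := by
    ext v
    simp only [Set.mem_ofPred_eq, Set.mem_image, Finset.mem_coe, eq_comm]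
  unfold distMqp
  rw [hset, Real.sInf_eq_zero_iff_zero_mem ((Finset.finite_toSet _).image g)
    ⟨g 0, 0, by simp [Nat.mul_pos hp hq], rfl⟩ (by rintro _ ⟨j, -, rfl⟩; exact hg j)]
  simp only [Set.mem_image, Finset.mem_coe, Finset.mem_range]
  refine exists_congr fun j => and_congr_right fun _ => ?_
  exact add_eq_zero_iff_of_nonneg (dmod_nonneg hq _) (dmod_nonneg hp _)

lemma natCast_div_mem_Ico {p q j : ℕ} (hp : 0 < p) (hj : j < p * q) :
    (j : ℝ) / p ∈ Set.Ico (0 : ℝ) q := by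
  have hp' : (0 : ℝ) < p := by exact_mod_cast hp
  refine ⟨by positivity, (div_lt_iff₀ hp').mpr ?_⟩
  rw [mul_comm]
  exact_mod_cast hj

lemma zero_points_eq_image {p q : ℕ} (hp : 0 < p) (hq : 0 < q) :
    {x : ℝ × ℝ | x ∈ Set.Ico (0 : ℝ) q ×ˢ Set.Ico (0 : ℝ) p ∧ distMqp p q x (0, 0) = 0} =
      (fun j : ℕ => ((j : ℝ) / p, (j : ℝ) / q)) '' ↑(Finset.range (p * q)) := by
  ext x
  simp only [Set.mem_ofPred_eq, Set.mem_prod, distMqp_eq_zero_iff hp hq, Set.mem_image,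
    Finset.mem_coe, Finset.mem_range, zero_sub, neg_add_eq_sub]
  constructor
  · rintro ⟨⟨hx1, hx2⟩, j, hj, h1, h2⟩
    have hjq : j < q * p := by rwa [mul_comm]
    refine ⟨j, hj, Prod.ext ?_ ?_⟩
    · exact ((dmod_sub_eq_zero_iff hq hx1 (natCast_div_mem_Ico hp hj)).mp h1).symm
    · exact ((dmod_sub_eq_zero_iff hp hx2 (natCast_div_mem_Ico hq hjq)).mp h2).symm
  · rintro ⟨j, hj, rfl⟩
    have hjq : j < q * p := by rwa [mul_comm]
    refine ⟨⟨natCast_div_mem_Ico hp hj, natCast_div_mem_Ico hq hjq⟩, j, hj, ?_, ?_⟩ <;>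
      simp [dmod, mmod]

theorem ncard_zero_points_general (p q : ℕ) (hp : 0 < p) (hq : 0 < q) :
    Set.ncard {x : ℝ × ℝ |
        x ∈ Set.Ico (0:ℝ) (q : ℝ) ×ˢ Set.Ico (0:ℝ) (p : ℝ) ∧
        distMqp p q x (0, 0) = 0} = p * q := by
  have hinj : Function.Injective fun j : ℕ => ((j : ℝ) / p, (j : ℝ) / q) := by
    intro a b hab
    have hp' : (p : ℝ) ≠ 0 := by positivity
    exact_mod_cast (div_left_inj' hp').mp (congrArg Prod.fst hab)
  rw [zero_points_eq_image hp hq, Set.ncard_image_of_injective _ hinj, Set.ncard_coe_finset,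
    Finset.card_range]

/-- The set of zero points of `M^{q/p}` in `[0,q) × [0,p)` has exactly `p*q` elements. -/
theorem ncard_zero_points (p q : ℕ) (hp : 0 < p) (hq : 0 < q) (hpq : Nat.Coprime p q) :
    Set.ncard {x : ℝ × ℝ |
        x ∈ Set.Ico (0:ℝ) (q : ℝ) ×ˢ Set.Ico (0:ℝ) (p : ℝ) ∧
        distMqp p q x (0, 0) = 0} = p * q :=
  ncard_zero_points_general p q hp hq
end

section
/- For coprime positive integers p and q and any two points x, y in [0,q)×[0,p), the Möbius distance on M^{q/p} is subadditive with respect to the addition ⊕: dist(x⊕y, (0,0)) ≤ dist(x,(0,0)) + dist(y,(0,0)). -/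
/-!
`dmod k u` is the distance from `u` to the lattice `kℤ`: it is at most `|u - k n|` for every
integer `n`, with equality for some `n`. This makes it subadditive and `k`-periodic. A minimiser
`j₁` for `x` and `j₂` for `y` then yield the candidate `j₁ + j₂` (reduced mod `pq`) for `x ⊕ y`,
because `⊕` and the reduction only shift the arguments of `dmod q` and `dmod p` by multiples of
`q` and `p`.
-/

section Dmod

variable {k : ℕ}

lemma mmod_nonneg (hk : 0 < k) (u : ℝ) : 0 ≤ mmod k u := by
  have hk' : (0 : ℝ) < k := by exact_mod_cast hk
  have := (le_div_iff₀ hk').mp (Int.floor_le (u / k))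
  unfold mmod
  linarith

lemma mmod_lt (hk : 0 < k) (u : ℝ) : mmod k u < k := by
  have hk' : (0 : ℝ) < k := by exact_mod_cast hk
  have := (div_lt_iff₀ hk').mp (Int.lt_floor_add_one (u / k))
  unfold mmod
  linarith

lemma dmod_le_abs_sub_mul (hk : 0 < k) (u : ℝ) (n : ℤ) : dmod k u ≤ |u - k * n| := by
  have ha₀ := mmod_nonneg hk u
  have ha₁ := mmod_lt hk u
  have hk' : (0 : ℝ) < k := by exact_mod_cast hk
  have hu : u - k * n = mmod k u + k * ((⌊u / k⌋ - n : ℤ) : ℝ) := by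
    unfold mmod; push_cast; ring
  rw [hu]
  rcases le_or_gt 0 (⌊u / k⌋ - n) with hm | hm
  · have hm' : (0 : ℝ) ≤ ((⌊u / k⌋ - n : ℤ) : ℝ) := by exact_mod_cast hm
    rw [abs_of_nonneg (by positivity)]
    exact (min_le_left _ _).trans (by nlinarith)
  · have hm' : ((⌊u / k⌋ - n : ℤ) : ℝ) ≤ -1 := by exact_mod_cast Int.le_sub_one_of_lt hm
    rw [abs_of_neg (by nlinarith)]
    exact (min_le_right _ _).trans (by nlinarith)

lemma exists_dmod_eq_abs_sub_mul (hk : 0 < k) (u : ℝ) : ∃ n : ℤ, dmod k u = |u - k * n| := by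
  have ha₀ := mmod_nonneg hk u
  have ha₁ := mmod_lt hk u
  have hu : u = mmod k u + k * ⌊u / k⌋ := by unfold mmod; ring
  rcases min_choice (mmod k u) (k - mmod k u) with h | h
  · refine ⟨⌊u / k⌋, ?_⟩
    rw [dmod, h, abs_of_nonneg (by linarith)]
    linarith
  · refine ⟨⌊u / k⌋ + 1, ?_⟩
    rw [dmod, h, abs_of_neg (by push_cast; linarith)]
    push_cast
    linarith

lemma dmod_add_le (hk : 0 < k) (u v : ℝ) : dmod k (u + v) ≤ dmod k u + dmod k v := by
  obtain ⟨m, hm⟩ := exists_dmod_eq_abs_sub_mul hk u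
  obtain ⟨n, hn⟩ := exists_dmod_eq_abs_sub_mul hk v
  calc dmod k (u + v) ≤ |u + v - k * ((m + n : ℤ) : ℝ)| := dmod_le_abs_sub_mul hk _ _
    _ = |(u - k * m) + (v - k * n)| := by push_cast; ring_nf
    _ ≤ dmod k u + dmod k v := hm ▸ hn ▸ abs_add_le _ _

lemma dmod_add_mul_intCast (hk : 0 < k) (u : ℝ) (n : ℤ) : dmod k (u + k * n) = dmod k u := by
  obtain ⟨m, hm⟩ := exists_dmod_eq_abs_sub_mul hk u
  obtain ⟨m', hm'⟩ := exists_dmod_eq_abs_sub_mul hk (u + k * n)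
  apply le_antisymm
  · calc dmod k (u + k * n) ≤ |u + k * n - k * ((m + n : ℤ) : ℝ)| := dmod_le_abs_sub_mul hk _ _
      _ = dmod k u := by rw [hm]; push_cast; ring_nf
  · calc dmod k u ≤ |u - k * ((m' - n : ℤ) : ℝ)| := dmod_le_abs_sub_mul hk _ _
      _ = dmod k (u + k * n) := by rw [hm']; push_cast; ring_nf

lemma dmod_neg_mmod_add (hk : 0 < k) (u w : ℝ) : dmod k (-mmod k u + w) = dmod k (-u + w) := by
  rw [← dmod_add_mul_intCast hk (-u + w) ⌊u / k⌋, mmod]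
  ring_nf

end Dmod

section Mobius

variable {p q : ℕ}

noncomputable def distMqpTerm (p q : ℕ) (x y : ℝ × ℝ) (j : ℕ) : ℝ :=
  dmod q (y.1 - x.1 + (j : ℝ) / (p : ℝ)) + dmod p (y.2 - x.2 + (j : ℝ) / (q : ℝ))

lemma distMqp_eq_inf' (h : 0 < p * q) (x y : ℝ × ℝ) :
    distMqp p q x y =
      (Finset.range (p * q)).inf' (Finset.nonempty_range_iff.2 h.ne') (distMqpTerm p q x y) := by
  rw [Finset.inf'_eq_csInf_image, distMqp]
  congr 1
  ext v
  simp [distMqpTerm, eq_comm]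

lemma distMqpTerm_mod (hp : 0 < p) (hq : 0 < q) (x y : ℝ × ℝ) (j : ℕ) :
    distMqpTerm p q x y (j % (p * q)) = distMqpTerm p q x y j := by
  have hp' : (p : ℝ) ≠ 0 := by positivity
  have hq' : (q : ℝ) ≠ 0 := by positivity
  have hj : (j : ℝ) = (j % (p * q) : ℕ) + p * q * (j / (p * q) : ℕ) := by
    exact_mod_cast (Nat.mod_add_div j (p * q)).symm
  have hj₁ : (j : ℝ) / p = (j % (p * q) : ℕ) / p + q * (((j / (p * q) : ℕ) : ℤ) : ℝ) := by
    rw [hj, Int.cast_natCast]; field_simp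
  have hj₂ : (j : ℝ) / q = (j % (p * q) : ℕ) / q + p * (((j / (p * q) : ℕ) : ℤ) : ℝ) := by
    rw [hj, Int.cast_natCast]; field_simp
  rw [distMqpTerm, distMqpTerm, hj₁, hj₂, ← add_assoc, ← add_assoc, dmod_add_mul_intCast hq,
    dmod_add_mul_intCast hp]

lemma distMqpTerm_oplus_le (hp : 0 < p) (hq : 0 < q) (x y : ℝ × ℝ) (j₁ j₂ : ℕ) :
    distMqpTerm p q (oplusMqp p q x y) (0, 0) (j₁ + j₂)
      ≤ distMqpTerm p q x (0, 0) j₁ + distMqpTerm p q y (0, 0) j₂ :=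
  calc distMqpTerm p q (oplusMqp p q x y) (0, 0) (j₁ + j₂)
      = dmod q (-(x.1 + y.1) + ((j₁ + j₂ : ℕ) : ℝ) / p)
          + dmod p (-(x.2 + y.2) + ((j₁ + j₂ : ℕ) : ℝ) / q) := by
        simp only [distMqpTerm, oplusMqp, zero_sub, dmod_neg_mmod_add hq, dmod_neg_mmod_add hp]
    _ = dmod q ((-x.1 + j₁ / p) + (-y.1 + j₂ / p))
          + dmod p ((-x.2 + j₁ / q) + (-y.2 + j₂ / q)) := by
        push_cast; ring_nf
    _ ≤ (dmod q (-x.1 + j₁ / p) + dmod q (-y.1 + j₂ / p))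
          + (dmod p (-x.2 + j₁ / q) + dmod p (-y.2 + j₂ / q)) :=
        add_le_add (dmod_add_le hq _ _) (dmod_add_le hp _ _)
    _ = distMqpTerm p q x (0, 0) j₁ + distMqpTerm p q y (0, 0) j₂ := by
        simp only [distMqpTerm, zero_sub]; ring

end Mobius

theorem distMqp_oplus_le_general (p q : ℕ) (hp : 0 < p) (hq : 0 < q)
    (x y : ℝ × ℝ) :
    distMqp p q (oplusMqp p q x y) (0, 0)
      ≤ distMqp p q x (0, 0) + distMqp p q y (0, 0) := by
  have hpq : 0 < p * q := Nat.mul_pos hp hq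
  simp only [distMqp_eq_inf' hpq]
  obtain ⟨j₁, -, h₁⟩ := Finset.exists_mem_eq_inf' (Finset.nonempty_range_iff.2 hpq.ne')
    (distMqpTerm p q x (0, 0))
  obtain ⟨j₂, -, h₂⟩ := Finset.exists_mem_eq_inf' (Finset.nonempty_range_iff.2 hpq.ne')
    (distMqpTerm p q y (0, 0))
  rw [h₁, h₂]
  calc _ ≤ distMqpTerm p q (oplusMqp p q x y) (0, 0) ((j₁ + j₂) % (p * q)) :=
        Finset.inf'_le _ (Finset.mem_range.2 (Nat.mod_lt _ hpq))
    _ ≤ _ := by rw [distMqpTerm_mod hp hq]; exact distMqpTerm_oplus_le hp hq x y j₁ j₂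

/-- Subadditivity of the Möbius distance with respect to `⊕`:
`dist (x ⊕ y) 0 ≤ dist x 0 + dist y 0`. -/
theorem distMqp_oplus_le (p q : ℕ) (hp : 0 < p) (hq : 0 < q) (hpq : Nat.Coprime p q)
    (x y : ℝ × ℝ)
    (hx : x ∈ Set.Ico (0:ℝ) (q : ℝ) ×ˢ Set.Ico (0:ℝ) (p : ℝ))
    (hy : y ∈ Set.Ico (0:ℝ) (q : ℝ) ×ˢ Set.Ico (0:ℝ) (p : ℝ)) :
    distMqp p q (oplusMqp p q x y) (0, 0)
      ≤ distMqp p q x (0, 0) + distMqp p q y (0, 0) :=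
  distMqp_oplus_le_general p q hp hq x y
end
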